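/- For every λ-term t that is not a variable, the free variables of t equal the free variables of its crumbling: fv(t) = fv(⌊t⌋). -/

import Mathlib

/-- λ-terms -/
inductive Tm where
  | var : ℕ → Tm
  | lam : ℕ → Tm → Tm
  | app : Tm → Tm → Tm
deriving DecidableEq

def Tm.fv : Tm → Finset ℕ
  | .var x => {x}
  | .lam x t => t.fv.erase x
  | .app t u => t.fv ∪ u.fv

def Tm.isValue : Tm → Prop
  | .var _ => True
  | .lam _ _ => True
  | .app _ _ => False

def Tm.subst : Tm → ℕ → Tm → Tm
  | .var x, z, s => if x = z then s else .var x
  | .lam x t, z, s => if x = z then .lam x t else .lam x (t.subst z s)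
  | .app t u, z, s => .app (t.subst z s) (u.subst z s)

def Tm.size : Tm → ℕ
  | .var _ => 1
  | .lam _ t => t.size + 1
  | .app t u => t.size + u.size + 1

/-- Right v-contexts: R ::= ⟨·⟩ | t R | R v -/
inductive RCtx where
  | hole : RCtx
  | appL : Tm → RCtx → RCtx
  | appR : RCtx → Tm → RCtx

def RCtx.wf : RCtx → Prop
  | .hole => True
  | .appL _ R => R.wf
  | .appR R v => R.wf ∧ v.isValue

def RCtx.plug : RCtx → Tm → Tm
  | .hole, t => t
  | .appL u R, t => .app u (R.plug t)
  | .appR R v, t => .app (R.plug t) v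

def RCtx.comp : RCtx → RCtx → RCtx
  | .hole, R' => R'
  | .appL u R, R' => .appL u (R.comp R')
  | .appR R v, R' => .appR (R.comp R') v

/-- weak call-by-value reduction -/
def BetaV (t u : Tm) : Prop :=
  ∃ R : RCtx, R.wf ∧ ∃ x body v, Tm.isValue v ∧
    t = R.plug (.app (.lam x body) v) ∧ u = R.plug (body.subst x v)

/-- general one-hole contexts -/
inductive PCtx where
  | hole : PCtx
  | lam : ℕ → PCtx → PCtx
  | appL : PCtx → Tm → PCtx
  | appR : Tm → PCtx → PCtx

def PCtx.plug : PCtx → Tm → Tm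
  | .hole, t => t
  | .lam x C, t => .lam x (C.plug t)
  | .appL C u, t => .app (C.plug t) u
  | .appR u C, t => .app u (C.plug t)

/-- a one-hole context is a right v-context -/
def PCtx.isRight : PCtx → Prop
  | .hole => True
  | .lam _ _ => False
  | .appL C u => C.isRight ∧ u.isValue
  | .appR _ C => C.isRight

/-- `HS t z C` : C is the result of replacing the (unique) occurrence of z in t by a hole -/
inductive HS : Tm → ℕ → PCtx → Prop
  | var {z} : HS (.var z) z .hole
  | lam {x z t C} : x ≠ z → HS t z C → HS (.lam x t) z (.lam x C)
  | appL {z t u C} : HS t z C → z ∉ u.fv → HS (.app t u) z (.appL C u)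
  | appR {z t u C} : z ∉ t.fv → HS u z C → HS (.app t u) z (.appR t C)

-- Crumbled syntax: bites and environments.  The binder `none` stands for `*`. 
mutual
inductive Bite where
  | app : ℕ → ℕ → Bite
  | lamVar : ℕ → ℕ → Bite      -- λx.[*←y]
  | lam : ℕ → Env → Bite       -- λx.E
inductive Env where
  | nil : Env
  | cons : Env → Option ℕ → Bite → Env   -- E[x←b]
end

def Env.append : Env → Env → Env
  | E, .nil => E
  | E, .cons E' x b => .cons (E.append E') x b

mutual
def Bite.fv : Bite → Finset ℕ
  | .app x y => {x, y}
  | .lamVar x y => ({y} : Finset ℕ) \ {x}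
  | .lam x E => E.fv.erase x
def Env.fv : Env → Finset ℕ
  | .nil => ∅
  | .cons E (some z) b => (E.fv.erase z) ∪ b.fv
  | .cons E none b => E.fv ∪ b.fv
end

mutual
def Bite.bv : Bite → Finset ℕ
  | .app _ _ => ∅
  | .lamVar x _ => {x}
  | .lam x E => insert x E.bv
def Env.bv : Env → Finset ℕ
  | .nil => ∅
  | .cons E _ b => E.bv ∪ b.bv
end

def Env.domList : Env → List (Option ℕ)
  | .nil => []
  | .cons E z _ => z :: E.domList

def Bite.isVal : Bite → Prop
  | .app _ _ => False
  | _ => True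

/-- every entry maps a variable to a crumbled value -/
def Env.IsVEnv : Env → Prop
  | .nil => True
  | .cons E _ b => E.IsVEnv ∧ b.isVal

/-- a crumble: nonempty environment whose leftmost entry binds `*` -/
def Env.IsCrumble : Env → Prop
  | .nil => False
  | .cons .nil z _ => z = none
  | .cons E _ _ => E.IsCrumble

def Env.lookup : Env → ℕ → Option Bite
  | .nil, _ => none
  | .cons E (some y) b, x => if y = x then some b else E.lookup x
  | .cons E none _, x => E.lookup x

-- substitution of a variable for a variable, leaving domains untouched 
mutual
def Bite.rename : Bite → ℕ → ℕ → Bite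
  | .app a b, z, y => .app (if a = z then y else a) (if b = z then y else b)
  | .lamVar x w, z, y =>
      if x = z then .lamVar x w else .lamVar x (if w = z then y else w)
  | .lam x E, z, y => if x = z then .lam x E else .lam x (E.rename z y)
def Env.rename : Env → ℕ → ℕ → Env
  | .nil, _, _ => .nil
  | .cons E x b, z, y => .cons (E.rename z y) x (b.rename z y)
end

/-- replace the binder of the leftmost entry -/
def Env.setHead : Env → Option ℕ → Env
  | .nil, _ => .nil
  | .cons .nil _ b, z => .cons .nil z b
  | .cons E x b, z => .cons (E.setHead z) x b

def Env.len : Env → ℕ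
  | .nil => 0
  | .cons E _ _ => E.len + 1

mutual
def Bite.size : Bite → ℕ
  | .app _ _ => 2
  | .lamVar _ _ => 2
  | .lam _ E => E.size + 1
def Env.size : Env → ℕ
  | .nil => 0
  | .cons E _ b => E.size + b.size
end

/-- reduction of the finest crumbled calculus -/
inductive Step : Env → Env → Prop
  | m1 {E Ev : Env} {z : Option ℕ} {x y x₁ : ℕ} {Eb : Env} :
      Ev.IsVEnv → Ev.lookup x = some (.lam x₁ Eb) → Eb.IsCrumble →
      Step ((E.cons z (.app x y)).append Ev)
           ((E.append ((Eb.rename x₁ y).setHead z)).append Ev)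
  | m2 {E Ev : Env} {z : Option ℕ} {x y x₁ y₁ : ℕ} {v : Bite} :
      Ev.IsVEnv → Ev.lookup x = some (.lamVar x₁ y₁) →
      Ev.lookup (if y₁ = x₁ then y else y₁) = some v →
      Step ((E.cons z (.app x y)).append Ev) ((E.cons z v).append Ev)

def maxVar : Tm → ℕ
  | .var x => x
  | .lam x t => max x (maxVar t)
  | .app t u => max (maxVar t) (maxVar u)

/-- the finest crumbling translation, with a counter supplying fresh variables -/
def crumbA : Tm → ℕ → Env × ℕ
  | .var x, n => (.cons .nil none (.app x x), n)
  | .lam x (.var y), n => (.cons .nil none (.lamVar x y), n)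
  | .lam x t, n =>
      let p := crumbA t n
      (.cons .nil none (.lam x p.1), p.2)
  | .app (.var x) (.var y), n => (.cons .nil none (.app x y), n)
  | .app u (.var y), n =>
      let p := crumbA u n
      ((Env.cons .nil none (.app p.2 y)).append (p.1.setHead (some p.2)), p.2 + 1)
  | .app (.var x) u', n =>
      let p := crumbA u' n
      ((Env.cons .nil none (.app x p.2)).append (p.1.setHead (some p.2)), p.2 + 1)
  | .app u u', n =>
      let p := crumbA u n
      let q := crumbA u' p.2
      (((Env.cons .nil none (.app q.2 (q.2 + 1))).append
          (p.1.setHead (some q.2))).append (q.1.setHead (some (q.2 + 1))),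
       q.2 + 2)

def crumb (t : Tm) : Env := (crumbA t (maxVar t + 1)).1

-- read-back of bites and environments 
mutual
def Bite.rb : Bite → Tm
  | .app x y => .app (.var x) (.var y)
  | .lamVar x y => .lam x (.var y)
  | .lam x E => .lam x (Env.rb E)
def Env.rb : Env → Tm
  | .nil => .var 0
  | .cons .nil _ b => Bite.rb b
  | .cons E (some z) b => (Env.rb E).subst z (Bite.rb b)
  | .cons (.cons E w b') none b => Env.rb (.cons E w b')
end

/-- the parallel substitution σ_{E_v} applied to a term -/
def Env.applySigma : Env → Tm → Tm
  | .nil, t => t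
  | .cons E (some x) b, t => (E.applySigma t).subst x (Bite.rb b)
  | .cons E none _, t => E.applySigma t

/-- σ applied to the non-hole parts of a right v-context -/
def Env.applySigmaR : Env → RCtx → RCtx
  | _, .hole => .hole
  | Ev, .appL u R => .appL (Ev.applySigma u) (Ev.applySigmaR R)
  | Ev, .appR R v => .appR (Ev.applySigmaR R) (Ev.applySigma v)

def Env.WellNamed (E : Env) : Prop :=
  E.domList.Nodup ∧
  (∀ x : ℕ, some x ∈ E.domList → x ∉ E.bv) ∧
  (∀ (E₁ : Env) (z : Option ℕ) (b : Bite) (E₂ : Env),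
     E = (E₁.cons z b).append E₂ →
     ∀ v : ℕ, z = some v → v ∉ b.fv ∧ v ∉ E₂.fv)

/-- lookup returning the read-back of the bound value, defaulting to the variable -/
def Env.lookTm (E : Env) (x : ℕ) : Tm :=
  match E.lookup x with
  | some b => b.rb
  | none => .var x

/-- RCAM: history entries and states -/
inductive HEntry where
  | unit : HEntry
  | pair : ℕ → ℕ → HEntry

abbrev MState := Env × Env × List HEntry

inductive FStep : MState → MState → Prop
  | sea {E₁ Ev : Env} {H : List HEntry} {x : Option ℕ} {v : Bite} :
      v.isVal →
      FStep (E₁.cons x v, Ev, H) (E₁, (Env.cons .nil x v).append Ev, .unit :: H)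
  | m1 {E₁ Ev : Env} {H : List HEntry} {z : Option ℕ} {x y x₁ : ℕ} {Eb : Env} :
      Ev.IsVEnv → Ev.lookup x = some (.lam x₁ Eb) → Eb.IsCrumble →
      FStep (E₁.cons z (.app x y), Ev, H)
            (E₁.append ((Eb.rename x₁ y).setHead z), Ev, .pair x y :: H)
  | m2 {E₁ Ev : Env} {H : List HEntry} {z : Option ℕ} {x y x₁ y₁ : ℕ} {v : Bite} :
      Ev.IsVEnv → Ev.lookup x = some (.lamVar x₁ y₁) →
      Ev.lookup (if y₁ = x₁ then y else y₁) = some v →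
      FStep (E₁.cons z (.app x y), Ev, H)
            (E₁, (Env.cons .nil z v).append Ev, .pair x y :: H)

inductive BStep : MState → MState → Prop
  | sea {E₁ Ev : Env} {H : List HEntry} {x : Option ℕ} {v : Bite} :
      v.isVal →
      BStep (E₁, (Env.cons .nil x v).append Ev, .unit :: H) (E₁.cons x v, Ev, H)
  | m1 {E₁ Ev D : Env} {H : List HEntry} {z : Option ℕ} {x y x₁ : ℕ}
       {Eb : Env} {b' : Bite} :
      Ev.IsVEnv → Ev.lookup x = some (.lam x₁ Eb) → Eb.IsCrumble →
      D.len = Eb.len - 1 →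
      BStep ((E₁.cons z b').append D, Ev, .pair x y :: H)
            (E₁.cons z (.app x y), Ev, H)
  | m2 {E₁ Ev : Env} {H : List HEntry} {z : Option ℕ} {x y x₁ y₁ : ℕ} {w : Bite} :
      Ev.IsVEnv → Ev.lookup x = some (.lamVar x₁ y₁) →
      BStep (E₁, (Env.cons .nil z w).append Ev, .pair x y :: H)
            (E₁.cons z (.app x y), Ev, H)


/-! Auxiliary material for crumb_fv -/

def foldE (S : Finset ℕ) : Env → Finset ℕ
  | .nil => S
  | .cons E (some z) b => (foldE S E).erase z ∪ b.fv
  | .cons E none b => foldE S E ∪ b.fv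

lemma fv_eq_foldE : ∀ E : Env, E.fv = foldE ∅ E
  | .nil => rfl
  | .cons E (some z) b => by simp [Env.fv, foldE, fv_eq_foldE E]
  | .cons E none b => by simp [Env.fv, foldE, fv_eq_foldE E]

lemma foldE_append (S : Finset ℕ) (A : Env) :
    ∀ B, foldE S (A.append B) = foldE (foldE S A) B
  | .nil => rfl
  | .cons B (some z) b => by simp [Env.append, foldE, foldE_append S A B]
  | .cons B none b => by simp [Env.append, foldE, foldE_append S A B]

lemma foldE_setHead (m : ℕ) :
    ∀ (E : Env), E.IsCrumble → ∀ S, foldE S (E.setHead (some m)) = foldE (S.erase m) E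
  | .nil, h => absurd h (by simp [Env.IsCrumble])
  | .cons .nil z b, h => by
      have hz : z = none := h
      subst hz
      intro S
      simp [Env.setHead, foldE]
  | .cons (.cons E w c) z b, h => by
      intro S
      have ih := foldE_setHead m (.cons E w c) h S
      cases z <;> simp [Env.setHead, foldE, ih]

lemma isCrumble_cons (E : Env) (z : Option ℕ) (b : Bite) (h : E.IsCrumble) :
    (Env.cons E z b).IsCrumble := by
  cases E with
  | nil => exact absurd h (by simp [Env.IsCrumble])
  | cons E' w c => exact h

lemma isCrumble_append (A : Env) (hA : A.IsCrumble) :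
    ∀ B, (A.append B).IsCrumble
  | .nil => hA
  | .cons B z b => isCrumble_cons _ _ _ (isCrumble_append A hA B)

lemma isCrumble_setHead (z : Option ℕ) :
    ∀ (E : Env), E.IsCrumble → (E.setHead z).IsCrumble → True := fun _ _ _ => trivial

lemma isCrumble_setHead' (z : Option ℕ) :
    ∀ (E : Env), E ≠ .nil → (E.setHead z) ≠ .nil
  | .nil, h => absurd rfl h
  | .cons .nil w b, _ => by simp [Env.setHead]
  | .cons (.cons E u c) w b, _ => by simp [Env.setHead]

lemma crumble_ne_nil : ∀ (E : Env), E.IsCrumble → E ≠ .nil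
  | .nil, h => absurd h (by simp [Env.IsCrumble])
  | .cons _ _ _, _ => by simp

lemma fv_le_maxVar : ∀ t : Tm, ∀ x ∈ t.fv, x ≤ maxVar t
  | .var y => by simp [Tm.fv, maxVar]
  | .lam y t => by
      intro x hx
      simp [Tm.fv] at hx
      exact le_trans (fv_le_maxVar t x hx.2) (by simp [maxVar])
  | .app t u => by
      intro x hx
      simp [Tm.fv] at hx
      rcases hx with h | h
      · exact le_trans (fv_le_maxVar t x h) (by simp [maxVar])
      · exact le_trans (fv_le_maxVar u x h) (by simp [maxVar])

lemma erase_union_small {S : Finset ℕ} {F : Finset ℕ} {m : ℕ}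
    (hS : m ∉ S) (hF : m ∉ F) : (S ∪ F).erase m = S ∪ F := by
  apply Finset.erase_eq_of_notMem; simp [hS, hF]

lemma caseL (u : Tm) (n y : ℕ) (hy : y < n)
    (h1 : n ≤ (crumbA u n).2)
    (h2 : (crumbA u n).1.IsCrumble)
    (h3 : ∀ S : Finset ℕ, (∀ x ∈ S, x < n ∨ (crumbA u n).2 ≤ x) →
      foldE S (crumbA u n).1 = S ∪ u.fv) :
    ∀ S : Finset ℕ, (∀ x ∈ S, x < n ∨ (crumbA u n).2 + 1 ≤ x) →
      foldE S ((Env.cons .nil none (.app (crumbA u n).2 y)).append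
        ((crumbA u n).1.setHead (some (crumbA u n).2))) = S ∪ (u.fv ∪ {y}) := by
  intro S hS
  set m := (crumbA u n).2 with hm
  rw [foldE_append, foldE_setHead _ _ h2]
  have e1 : foldE S (Env.cons .nil none (.app m y)) = S ∪ {m, y} := by
    simp [foldE, Bite.fv]
  rw [e1]
  have hmS : m ∉ S := by
    intro h; rcases hS m h with h' | h' <;> omega
  have hmy : m ≠ y := by omega
  have e2 : (S ∪ {m, y}).erase m = S ∪ {y} := by
    rw [show ({m, y} : Finset ℕ) = insert m {y} from rfl,
      Finset.erase_union_distrib, Finset.erase_eq_of_notMem hmS,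
      Finset.erase_insert (by simp [hmy])]
  rw [e2, h3 (S ∪ {y})]
  · rw [Finset.union_assoc, Finset.union_comm {y} u.fv]
  · intro x hx
    simp only [Finset.mem_union, Finset.mem_singleton] at hx
    rcases hx with hx | hx
    · rcases hS x hx with h' | h'
      · exact Or.inl h'
      · exact Or.inr (by omega)
    · subst hx; exact Or.inl hy

lemma caseR (u' : Tm) (n x : ℕ) (hx : x < n)
    (h1 : n ≤ (crumbA u' n).2)
    (h2 : (crumbA u' n).1.IsCrumble)
    (h3 : ∀ S : Finset ℕ, (∀ z ∈ S, z < n ∨ (crumbA u' n).2 ≤ z) →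
      foldE S (crumbA u' n).1 = S ∪ u'.fv) :
    ∀ S : Finset ℕ, (∀ z ∈ S, z < n ∨ (crumbA u' n).2 + 1 ≤ z) →
      foldE S ((Env.cons .nil none (.app x (crumbA u' n).2)).append
        ((crumbA u' n).1.setHead (some (crumbA u' n).2))) = S ∪ ({x} ∪ u'.fv) := by
  intro S hS
  set m := (crumbA u' n).2 with hm
  rw [foldE_append, foldE_setHead _ _ h2]
  have e1 : foldE S (Env.cons .nil none (.app x m)) = S ∪ {x, m} := by
    simp [foldE, Bite.fv]
  rw [e1]
  have hmS : m ∉ S := by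
    intro h; rcases hS m h with h' | h' <;> omega
  have hmx : x ≠ m := by omega
  have e2 : (S ∪ {x, m}).erase m = S ∪ {x} := by
    rw [show ({x, m} : Finset ℕ) = insert x {m} from rfl,
      Finset.erase_union_distrib, Finset.erase_eq_of_notMem hmS,
      Finset.erase_insert_of_ne hmx, Finset.erase_singleton]
    simp
  rw [e2, h3 (S ∪ {x})]
  · rw [Finset.union_assoc]
  · intro z hz
    simp only [Finset.mem_union, Finset.mem_singleton] at hz
    rcases hz with hz | hz
    · rcases hS z hz with h' | h'
      · exact Or.inl h'
      · exact Or.inr (by omega)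
    · subst hz; exact Or.inl hx
lemma caseB (u u' : Tm) (n : ℕ) (hu : maxVar u < n) (hu' : maxVar u' < n)
    (h1 : n ≤ (crumbA u n).2)
    (h2 : (crumbA u n).1.IsCrumble)
    (h3 : ∀ S : Finset ℕ, (∀ x ∈ S, x < n ∨ (crumbA u n).2 ≤ x) →
      foldE S (crumbA u n).1 = S ∪ u.fv)
    (h1' : (crumbA u n).2 ≤ (crumbA u' (crumbA u n).2).2)
    (h2' : (crumbA u' (crumbA u n).2).1.IsCrumble)
    (h3' : ∀ S : Finset ℕ,
      (∀ x ∈ S, x < (crumbA u n).2 ∨ (crumbA u' (crumbA u n).2).2 ≤ x) →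
      foldE S (crumbA u' (crumbA u n).2).1 = S ∪ u'.fv) :
    ∀ S : Finset ℕ, (∀ x ∈ S, x < n ∨ (crumbA u' (crumbA u n).2).2 + 2 ≤ x) →
      foldE S (((Env.cons .nil none
          (.app (crumbA u' (crumbA u n).2).2 ((crumbA u' (crumbA u n).2).2 + 1))).append
          ((crumbA u n).1.setHead (some (crumbA u' (crumbA u n).2).2))).append
          ((crumbA u' (crumbA u n).2).1.setHead (some ((crumbA u' (crumbA u n).2).2 + 1))))
        = S ∪ (u.fv ∪ u'.fv) := by
  intro S hS
  set p2 := (crumbA u n).2 with hp2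
  set q2 := (crumbA u' p2).2 with hq2
  rw [foldE_append, foldE_append, foldE_setHead _ _ h2, foldE_setHead _ _ h2']
  have e1 : foldE S (Env.cons .nil none (.app q2 (q2 + 1))) = S ∪ {q2, q2 + 1} := by
    simp [foldE, Bite.fv]
  rw [e1]
  have hq2S : q2 ∉ S := by
    intro h; rcases hS q2 h with h' | h' <;> omega
  have hq2S' : q2 + 1 ∉ S := by
    intro h; rcases hS (q2 + 1) h with h' | h' <;> omega
  have e2 : (S ∪ {q2, q2 + 1}).erase q2 = S ∪ {q2 + 1} := by
    rw [show ({q2, q2 + 1} : Finset ℕ) = insert q2 {q2 + 1} from rfl,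
      Finset.erase_union_distrib, Finset.erase_eq_of_notMem hq2S,
      Finset.erase_insert (by simp)]
  rw [e2, h3 (S ∪ {q2 + 1})]
  · have hfin : ∀ x ∈ u.fv, x ≤ maxVar u := fv_le_maxVar u
    have e3 : (S ∪ {q2 + 1} ∪ u.fv).erase (q2 + 1) = S ∪ u.fv := by
      rw [Finset.erase_union_distrib, Finset.erase_union_distrib,
        Finset.erase_eq_of_notMem hq2S', Finset.erase_singleton,
        Finset.erase_eq_of_notMem (fun h => by have := hfin _ h; omega)]
      simp
    rw [e3, h3' (S ∪ u.fv)]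
    · rw [Finset.union_assoc]
    · intro x hx
      simp at hx
      rcases hx with hx | hx
      · rcases hS x hx with h' | h'
        · exact Or.inl (by omega)
        · exact Or.inr (by omega)
      · exact Or.inl (by have := fv_le_maxVar u x hx; omega)
  · intro x hx
    simp only [Finset.mem_union, Finset.mem_singleton] at hx
    rcases hx with hx | hx
    · rcases hS x hx with h' | h'
      · exact Or.inl h'
      · exact Or.inr (by omega)
    · exact Or.inr (by omega)

lemma crumbA_spec : ∀ (t : Tm) (n : ℕ), maxVar t < n →
    n ≤ (crumbA t n).2 ∧ (crumbA t n).1.IsCrumble ∧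
    ∀ S : Finset ℕ, (∀ x ∈ S, x < n ∨ (crumbA t n).2 ≤ x) →
      foldE S (crumbA t n).1 = S ∪ t.fv := by
  intro t
  induction t with
  | var x =>
      intro n hn
      refine ⟨le_refl n, by simp [crumbA, Env.IsCrumble], ?_⟩
      intro S _
      simp [crumbA, foldE, Bite.fv, Tm.fv]
  | lam x t ih =>
      intro n hn
      have hmt : maxVar t < n := lt_of_le_of_lt (by simp [maxVar]) hn
      cases t with
      | var y =>
          refine ⟨le_refl n, by simp [crumbA, Env.IsCrumble], ?_⟩
          intro S _
          simp [crumbA, foldE, Bite.fv, Tm.fv, Finset.erase_eq]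
      | lam a b =>
          obtain ⟨h1, h2, h3⟩ := ih n hmt
          refine ⟨h1, by simp [crumbA, Env.IsCrumble], ?_⟩
          intro S _
          have := h3 ∅ (by simp)
          simp [crumbA, foldE, Bite.fv, Tm.fv, ← fv_eq_foldE] at this ⊢
          rw [this]
      | app a b =>
          obtain ⟨h1, h2, h3⟩ := ih n hmt
          refine ⟨h1, by simp [crumbA, Env.IsCrumble], ?_⟩
          intro S _
          have := h3 ∅ (by simp)
          simp [crumbA, foldE, Bite.fv, Tm.fv, ← fv_eq_foldE] at this ⊢
          rw [this]
  | app u u' ihu ihu' =>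
      intro n hn
      have hmu : maxVar u < n := lt_of_le_of_lt (by simp [maxVar]) hn
      have hmu' : maxVar u' < n := lt_of_le_of_lt (by simp [maxVar]) hn
      cases u with
      | var x =>
          cases u' with
          | var y =>
              refine ⟨le_refl n, by simp [crumbA, Env.IsCrumble], ?_⟩
              intro S _
              simp [crumbA, foldE, Bite.fv, Tm.fv, Finset.union_assoc]
          | lam a b =>
              obtain ⟨h1, h2, h3⟩ := ihu' n hmu'
              refine ⟨by simp only [crumbA]; omega,
                by simp only [crumbA]; exact isCrumble_append _ (by simp [Env.IsCrumble]) _, ?_⟩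
              intro S hS
              simp only [crumbA] at hS ⊢
              have := caseR (Tm.lam a b) n x (by simp [maxVar] at hmu; omega)
                h1 h2 h3 S hS
              simpa [Tm.fv, Finset.union_assoc] using this
          | app a b =>
              obtain ⟨h1, h2, h3⟩ := ihu' n hmu'
              refine ⟨by simp only [crumbA]; omega,
                by simp only [crumbA]; exact isCrumble_append _ (by simp [Env.IsCrumble]) _, ?_⟩
              intro S hS
              simp only [crumbA] at hS ⊢
              have := caseR (Tm.app a b) n x (by simp [maxVar] at hmu; omega)
                h1 h2 h3 S hS
              simpa [Tm.fv, Finset.union_assoc] using this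
      | lam a b =>
          cases u' with
          | var y =>
              obtain ⟨h1, h2, h3⟩ := ihu n hmu
              refine ⟨by simp only [crumbA]; omega,
                by simp only [crumbA]; exact isCrumble_append _ (by simp [Env.IsCrumble]) _, ?_⟩
              intro S hS
              simp only [crumbA] at hS ⊢
              have := caseL (Tm.lam a b) n y (by simp [maxVar] at hmu'; omega)
                h1 h2 h3 S hS
              simpa [Tm.fv, Finset.union_assoc] using this
          | lam c d =>
              obtain ⟨h1, h2, h3⟩ := ihu n hmu
              obtain ⟨h1', h2', h3'⟩ := ihu' _ (lt_of_lt_of_le hmu' h1)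
              refine ⟨by simp only [crumbA]; omega,
                by simp only [crumbA]
                   exact isCrumble_append _ (isCrumble_append _ (by simp [Env.IsCrumble]) _) _, ?_⟩
              intro S hS
              simp only [crumbA] at hS ⊢
              have := caseB (Tm.lam a b) (Tm.lam c d) n hmu hmu'
                h1 h2 h3 h1' h2' h3' S hS
              simpa [Tm.fv, Finset.union_assoc] using this
          | app c d =>
              obtain ⟨h1, h2, h3⟩ := ihu n hmu
              obtain ⟨h1', h2', h3'⟩ := ihu' _ (lt_of_lt_of_le hmu' h1)
              refine ⟨by simp only [crumbA]; omega,
                by simp only [crumbA]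
                   exact isCrumble_append _ (isCrumble_append _ (by simp [Env.IsCrumble]) _) _, ?_⟩
              intro S hS
              simp only [crumbA] at hS ⊢
              have := caseB (Tm.lam a b) (Tm.app c d) n hmu hmu'
                h1 h2 h3 h1' h2' h3' S hS
              simpa [Tm.fv, Finset.union_assoc] using this
      | app a b =>
          cases u' with
          | var y =>
              obtain ⟨h1, h2, h3⟩ := ihu n hmu
              refine ⟨by simp only [crumbA]; omega,
                by simp only [crumbA]; exact isCrumble_append _ (by simp [Env.IsCrumble]) _, ?_⟩
              intro S hS
              simp only [crumbA] at hS ⊢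
              have := caseL (Tm.app a b) n y (by simp [maxVar] at hmu'; omega)
                h1 h2 h3 S hS
              simpa [Tm.fv, Finset.union_assoc] using this
          | lam c d =>
              obtain ⟨h1, h2, h3⟩ := ihu n hmu
              obtain ⟨h1', h2', h3'⟩ := ihu' _ (lt_of_lt_of_le hmu' h1)
              refine ⟨by simp only [crumbA]; omega,
                by simp only [crumbA]
                   exact isCrumble_append _ (isCrumble_append _ (by simp [Env.IsCrumble]) _) _, ?_⟩
              intro S hS
              simp only [crumbA] at hS ⊢
              have := caseB (Tm.app a b) (Tm.lam c d) n hmu hmu'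
                h1 h2 h3 h1' h2' h3' S hS
              simpa [Tm.fv, Finset.union_assoc] using this
          | app c d =>
              obtain ⟨h1, h2, h3⟩ := ihu n hmu
              obtain ⟨h1', h2', h3'⟩ := ihu' _ (lt_of_lt_of_le hmu' h1)
              refine ⟨by simp only [crumbA]; omega,
                by simp only [crumbA]
                   exact isCrumble_append _ (isCrumble_append _ (by simp [Env.IsCrumble]) _) _, ?_⟩
              intro S hS
              simp only [crumbA] at hS ⊢
              have := caseB (Tm.app a b) (Tm.app c d) n hmu hmu'
                h1 h2 h3 h1' h2' h3' S hS
              simpa [Tm.fv, Finset.union_assoc] using this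

/-- for non-variable t, fv(t) = fv(⌊t⌋). -/
theorem crumb_fv (t : Tm) (hnv : ∀ x, t ≠ .var x) :
    t.fv = (crumb t).fv := by
  obtain ⟨h1, h2, h3⟩ := crumbA_spec t (maxVar t + 1) (by omega)
  simp only [crumb]
  rw [fv_eq_foldE, h3 ∅ (by simp)]
  simp
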